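/- Alternating optimization can be arbitrarily suboptimal: for every M > 0 there exists an instance of the dynamic MNL recommendation model (a choice of dimension d, items Ω ⊂ ℝ^d, harmful subset H, constant c > 0, attraction weights with α_H = α_NH > 0, β = 0, inherent profile u0, penalty λ ≥ 0, and capacity k = 1) satisfying the uniform contraction condition of Theorem 2, such that the alternating-optimization iterates converge to a policy π with f(π*) − f(π) > M, where π* maximizes the steady-state objective f over bounded-cardinality policies. -/

import Mathlib

open Finset
open scoped RealInnerProductSpace

noncomputable section

/-- User/item profile space: `ℝ^d` with the Euclidean norm. -/
abbrev Vec (d : ℕ) := EuclideanSpace ℝ (Fin d)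

/-- MNL score of item `v` under user profile `u`: `s_v(u) = exp(⟨v,u⟩)`. -/
def score {d : ℕ} {ι : Type} (V : ι → Vec d) (u : Vec d) (v : ι) : ℝ :=
  Real.exp ⟪V v, u⟫

/-- Total score of a set of items: `s_A(u) = ∑_{v∈A} s_v(u)`. -/
def sSet {d : ℕ} {ι : Type} (V : ι → Vec d) (u : Vec d) (A : Finset ι) : ℝ :=
  ∑ v ∈ A, score V u v

/-- MNL click function `g(x) = x/(x+c)`. -/
def gfun (c x : ℝ) : ℝ := x / (x + c)

/-- Probability that the user selects item `v`, conditional on recommended set `E`. -/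
def pvE {d : ℕ} {ι : Type} [Fintype ι] [DecidableEq ι]
    (V : ι → Vec d) (c : ℝ) (u : Vec d) (E : Finset ι) (v : ι) : ℝ :=
  if E = ∅ then score V u v / sSet V u Finset.univ
  else if v ∈ E then
    score V u v / sSet V u E * gfun c (sSet V u E)
      + score V u v / sSet V u Finset.univ * (1 - gfun c (sSet V u E))
  else score V u v / sSet V u Finset.univ * (1 - gfun c (sSet V u E))

/-- Unconditional probability that the user selects item `v` under policy `π`:
`p_v(π,u) = ∑_{C∈𝒞} p_C ∑_{E⊆C} p_{E|C} p_{v|E}(u)`. -/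
def pv {d : ℕ} {ι : Type} [Fintype ι] [DecidableEq ι]
    (V : ι → Vec d) (c : ℝ) (cand : Finset (Finset ι)) (pC : Finset ι → ℝ)
    (π : Finset ι → Finset ι → ℝ) (u : Vec d) (v : ι) : ℝ :=
  ∑ C ∈ cand, pC C * (∑ E ∈ C.powerset, π C E * pvE V c u E v)

/-- The fixed-point map
`F(π,u) = (β u0 + ∑_v α_v p_v(π,u) v) / (β + ∑_v α_v p_v(π,u))`. -/
def Fmap {d : ℕ} {ι : Type} [Fintype ι] [DecidableEq ι]
    (V : ι → Vec d) (c : ℝ) (cand : Finset (Finset ι)) (pC : Finset ι → ℝ)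
    (α : ι → ℝ) (β : ℝ) (u0 : Vec d)
    (π : Finset ι → Finset ι → ℝ) (u : Vec d) : Vec d :=
  (β + ∑ v, α v * pv V c cand pC π u v)⁻¹ •
    (β • u0 + ∑ v, (α v * pv V c cand pC π u v) • V v)

/-- A recommendation policy: for each candidate set `C ∈ 𝒞`, a probability
distribution over subsets `E ⊆ C`. -/
def ValidPolicy {ι : Type} [DecidableEq ι] (cand : Finset (Finset ι))
    (π : Finset ι → Finset ι → ℝ) : Prop :=
  ∀ C ∈ cand, (∀ E ∈ C.powerset, 0 ≤ π C E) ∧ (∑ E ∈ C.powerset, π C E) = 1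

/-- A bounded-cardinality policy with capacity `k`: a valid policy supported on subsets
of cardinality at most `k`. -/
def BoundedCard {ι : Type} [DecidableEq ι] (cand : Finset (Finset ι)) (k : ℕ)
    (π : Finset ι → Finset ι → ℝ) : Prop :=
  ValidPolicy cand π ∧ ∀ C ∈ cand, ∀ E ∈ C.powerset, k < E.card → π C E = 0

/-- Click-through rate at profile `u`:
`p_CLK(π,u) = ∑_C p_C ∑_E p_{E|C} g(s_E(u))`. -/
def pCLKd {d : ℕ} {ι : Type} [Fintype ι] [DecidableEq ι]
    (V : ι → Vec d) (c : ℝ) (cand : Finset (Finset ι)) (pC : Finset ι → ℝ)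
    (π : Finset ι → Finset ι → ℝ) (u : Vec d) : ℝ :=
  ∑ C ∈ cand, pC C * (∑ E ∈ C.powerset, π C E * gfun c (sSet V u E))

/-- Probability of harm at profile `u`:
`p_H(π,u) = (1 − p_CLK(π,u)) s_H(u)/s_Ω(u)`. -/
def pHd {d : ℕ} {ι : Type} [Fintype ι] [DecidableEq ι]
    (V : ι → Vec d) (c : ℝ) (cand : Finset (Finset ι)) (pC : Finset ι → ℝ)
    (Hset : Finset ι) (π : Finset ι → Finset ι → ℝ) (u : Vec d) : ℝ :=
  (1 - pCLKd V c cand pC π u) * sSet V u Hset / sSet V u Finset.univ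

/-- Objective at a given profile: `p_CLK(π,u) − λ p_H(π,u)`. -/
def objAt {d : ℕ} {ι : Type} [Fintype ι] [DecidableEq ι]
    (V : ι → Vec d) (c : ℝ) (cand : Finset (Finset ι)) (pC : Finset ι → ℝ)
    (Hset : Finset ι) (lam : ℝ) (π : Finset ι → Finset ι → ℝ) (u : Vec d) : ℝ :=
  pCLKd V c cand pC π u - lam * pHd V c cand pC Hset π u

namespace S5
open Real

noncomputable def iota (x : ℝ) : Vec 1 := WithLp.toLp 2 (fun _ => x)

lemma iota_zero : iota 0 = (0 : Vec 1) := rfl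

lemma inner_iota (y x : ℝ) : ⟪iota y, iota x⟫ = y * x := by
  simp [iota, PiLp.inner_apply, RCLike.inner_apply, mul_comm]

lemma norm_iota (y : ℝ) : ‖iota y‖ = |y| := by
  simp [iota, EuclideanSpace.norm_eq, Real.sqrt_sq_eq_abs]

noncomputable def av : Fin 4 → ℝ := ![1/100, -(1/100), 1/10, -(1/10)]

@[simp] lemma vec4_two (a b c d : ℝ) : ![a, b, c, d] 2 = c := rfl
@[simp] lemma vec4_three (a b c d : ℝ) : ![a, b, c, d] 3 = d := rfl

noncomputable def VV : Fin 4 → Vec 1 := fun i => iota (av i)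

lemma VV_inj : Function.Injective VV := by
  intro i j h
  have h0 : av i = av j := by simpa [VV, iota] using congrArg (fun w : Vec 1 => w 0) h
  fin_cases i <;> fin_cases j <;> simp_all [av] <;> norm_num at h0

def C0 : Finset (Fin 4) := {2, 3}

lemma pow_C0 : C0.powerset = {∅, {2}, {3}, {2,3}} := by decide

lemma score_eq (x : ℝ) (v : Fin 4) : score VV (iota x) v = Real.exp (av v * x) := by
  rw [score, VV, inner_iota]

end S5

namespace S5
open Real

noncomputable def e0 (x : ℝ) : ℝ := Real.exp (1/100 * x)
noncomputable def e1 (x : ℝ) : ℝ := Real.exp (-(1/100) * x)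
noncomputable def e2 (x : ℝ) : ℝ := Real.exp (1/10 * x)
noncomputable def e3 (x : ℝ) : ℝ := Real.exp (-(1/10) * x)
noncomputable def Dd (x : ℝ) : ℝ := e0 x + e1 x + e2 x + e3 x
noncomputable def Nn (x : ℝ) : ℝ :=
  1/100 * e0 x + -(1/100) * e1 x + 1/10 * e2 x + -(1/10) * e3 x
noncomputable def gg (s : ℝ) : ℝ := s / (s + 1)
noncomputable def A0 (x : ℝ) : ℝ := Nn x / Dd x
noncomputable def A2 (x : ℝ) : ℝ := 1/10 * gg (e2 x) + (1 - gg (e2 x)) * A0 x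
noncomputable def A3 (x : ℝ) : ℝ := -(1/10) * gg (e3 x) + (1 - gg (e3 x)) * A0 x
noncomputable def A23 (x : ℝ) : ℝ :=
  (1/10 * e2 x + -(1/10) * e3 x) / (e2 x + e3 x) * gg (e2 x + e3 x)
    + (1 - gg (e2 x + e3 x)) * A0 x
noncomputable def sig (x : ℝ) : ℝ := e0 x / Dd x

lemma e0_pos (x : ℝ) : 0 < e0 x := Real.exp_pos _
lemma e1_pos (x : ℝ) : 0 < e1 x := Real.exp_pos _
lemma e2_pos (x : ℝ) : 0 < e2 x := Real.exp_pos _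
lemma e3_pos (x : ℝ) : 0 < e3 x := Real.exp_pos _
lemma Dd_pos (x : ℝ) : 0 < Dd x := by
  have := e0_pos x; have := e1_pos x; have := e2_pos x; have := e3_pos x
  unfold Dd; linarith

lemma sSet_univ (x : ℝ) : sSet VV (iota x) Finset.univ = Dd x := by
  rw [sSet, Fin.sum_univ_four]
  simp only [score_eq, av, Dd, e0, e1, e2, e3]
  norm_num [Matrix.cons_val_zero, Matrix.cons_val_one]

lemma sSet_H (x : ℝ) : sSet VV (iota x) {0} = e0 x := by
  rw [sSet, Finset.sum_singleton, score_eq]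
  norm_num [av, e0]

lemma sSet_2 (x : ℝ) : sSet VV (iota x) {2} = e2 x := by
  rw [sSet, Finset.sum_singleton, score_eq]
  norm_num [av, e2]

lemma sSet_3 (x : ℝ) : sSet VV (iota x) {3} = e3 x := by
  rw [sSet, Finset.sum_singleton, score_eq]
  norm_num [av, e3]

lemma sSet_23 (x : ℝ) : sSet VV (iota x) {2,3} = e2 x + e3 x := by
  rw [sSet, show ({2,3} : Finset (Fin 4)) = insert 2 {3} from rfl,
    Finset.sum_insert (by decide), Finset.sum_singleton, score_eq, score_eq]
  norm_num [av, e2, e3]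

lemma sSet_empty (x : ℝ) : sSet VV (iota x) ∅ = 0 := by simp [sSet]

lemma gfun_one (s : ℝ) : gfun 1 s = gg s := rfl

end S5

namespace S5
open Real

lemma gg_nonneg {s : ℝ} (hs : 0 ≤ s) : 0 ≤ gg s := by
  unfold gg; positivity

lemma gg_lt_one {s : ℝ} (hs : 0 ≤ s) : gg s < 1 := by
  rw [gg, div_lt_one (by linarith)]; linarith

lemma sum1_empty (x : ℝ) : ∑ v, pvE VV 1 (iota x) ∅ v = 1 := by
  simp only [pvE, if_pos rfl, sSet_univ, Fin.sum_univ_four, score_eq]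
  have hD := Dd_pos x
  norm_num [av, Dd, e0, e1, e2, e3] at hD ⊢
  field_simp

lemma sumav_empty (x : ℝ) : ∑ v, pvE VV 1 (iota x) ∅ v * av v = A0 x := by
  simp only [pvE, if_pos rfl, sSet_univ, Fin.sum_univ_four, score_eq]
  have hD := (Dd_pos x).ne'
  simp only [A0, Nn, av, e0, e1, e2, e3]
  norm_num
  field_simp

lemma sum1_2 (x : ℝ) : ∑ v, pvE VV 1 (iota x) {2} v = 1 := by
  have hne : ¬(({2} : Finset (Fin 4)) = ∅) := by decide
  have h0 : ¬((0 : Fin 4) ∈ ({2} : Finset (Fin 4))) := by decide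
  have h1 : ¬((1 : Fin 4) ∈ ({2} : Finset (Fin 4))) := by decide
  have h2m : ((2 : Fin 4) ∈ ({2} : Finset (Fin 4))) := by decide
  have h3 : ¬((3 : Fin 4) ∈ ({2} : Finset (Fin 4))) := by decide
  simp only [pvE, Fin.sum_univ_four, sSet_univ, sSet_2, score_eq, gfun_one,
    if_neg hne, if_neg h0, if_neg h1, if_pos h2m, if_neg h3]
  rw [show av 0 * x = 1/100 * x by norm_num [av], show av 1 * x = -(1/100) * x by norm_num [av],
    show av 2 * x = 1/10 * x by norm_num [av], show av 3 * x = -(1/10) * x by norm_num [av]]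
  rw [← e0, ← e1, ← e2, ← e3]
  have hD := Dd_pos x
  have h2 := e2_pos x
  have h21 : (0:ℝ) < e2 x + 1 := by linarith
  rw [gg, Dd] at *
  set a := e0 x; set b := e1 x; set c := e2 x; set d := e3 x
  field_simp
  ring
end S5
namespace S5
open Real

lemma sumav_2 (x : ℝ) : ∑ v, pvE VV 1 (iota x) {2} v * av v = A2 x := by
  have hne : ¬(({2} : Finset (Fin 4)) = ∅) := by decide
  have h0 : ¬((0 : Fin 4) ∈ ({2} : Finset (Fin 4))) := by decide
  have h1 : ¬((1 : Fin 4) ∈ ({2} : Finset (Fin 4))) := by decide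
  have h2m : ((2 : Fin 4) ∈ ({2} : Finset (Fin 4))) := by decide
  have h3 : ¬((3 : Fin 4) ∈ ({2} : Finset (Fin 4))) := by decide
  simp only [pvE, Fin.sum_univ_four, sSet_univ, sSet_2, score_eq, gfun_one,
    if_neg hne, if_neg h0, if_neg h1, if_pos h2m, if_neg h3]
  rw [show av 0 * x = 1/100 * x by norm_num [av], show av 1 * x = -(1/100) * x by norm_num [av],
    show av 2 * x = 1/10 * x by norm_num [av], show av 3 * x = -(1/10) * x by norm_num [av]]
  rw [← e0, ← e1, ← e2, ← e3]
  rw [show av 0 = 1/100 by norm_num [av], show av 1 = -(1/100) by norm_num [av],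
    show av 2 = 1/10 by norm_num [av], show av 3 = -(1/10) by norm_num [av]]
  have hD := Dd_pos x
  have h2 := e2_pos x
  have h21 : (0:ℝ) < e2 x + 1 := by linarith
  rw [A2, A0, gg, Nn, Dd] at *
  set a := e0 x; set b := e1 x; set c := e2 x; set d := e3 x
  field_simp
  ring

lemma sum1_3 (x : ℝ) : ∑ v, pvE VV 1 (iota x) {3} v = 1 := by
  have hne : ¬(({3} : Finset (Fin 4)) = ∅) := by decide
  have h0 : ¬((0 : Fin 4) ∈ ({3} : Finset (Fin 4))) := by decide
  have h1 : ¬((1 : Fin 4) ∈ ({3} : Finset (Fin 4))) := by decide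
  have h2m : ¬((2 : Fin 4) ∈ ({3} : Finset (Fin 4))) := by decide
  have h3 : ((3 : Fin 4) ∈ ({3} : Finset (Fin 4))) := by decide
  simp only [pvE, Fin.sum_univ_four, sSet_univ, sSet_3, score_eq, gfun_one,
    if_neg hne, if_neg h0, if_neg h1, if_neg h2m, if_pos h3]
  rw [show av 0 * x = 1/100 * x by norm_num [av], show av 1 * x = -(1/100) * x by norm_num [av],
    show av 2 * x = 1/10 * x by norm_num [av], show av 3 * x = -(1/10) * x by norm_num [av]]
  rw [← e0, ← e1, ← e2, ← e3]
  have hD := Dd_pos x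
  have h3p := e3_pos x
  have h31 : (0:ℝ) < e3 x + 1 := by linarith
  rw [gg, Dd] at *
  set a := e0 x; set b := e1 x; set c := e2 x; set d := e3 x
  field_simp
  ring

lemma sumav_3 (x : ℝ) : ∑ v, pvE VV 1 (iota x) {3} v * av v = A3 x := by
  have hne : ¬(({3} : Finset (Fin 4)) = ∅) := by decide
  have h0 : ¬((0 : Fin 4) ∈ ({3} : Finset (Fin 4))) := by decide
  have h1 : ¬((1 : Fin 4) ∈ ({3} : Finset (Fin 4))) := by decide
  have h2m : ¬((2 : Fin 4) ∈ ({3} : Finset (Fin 4))) := by decide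
  have h3 : ((3 : Fin 4) ∈ ({3} : Finset (Fin 4))) := by decide
  simp only [pvE, Fin.sum_univ_four, sSet_univ, sSet_3, score_eq, gfun_one,
    if_neg hne, if_neg h0, if_neg h1, if_neg h2m, if_pos h3]
  rw [show av 0 * x = 1/100 * x by norm_num [av], show av 1 * x = -(1/100) * x by norm_num [av],
    show av 2 * x = 1/10 * x by norm_num [av], show av 3 * x = -(1/10) * x by norm_num [av]]
  rw [← e0, ← e1, ← e2, ← e3]
  rw [show av 0 = 1/100 by norm_num [av], show av 1 = -(1/100) by norm_num [av],
    show av 2 = 1/10 by norm_num [av], show av 3 = -(1/10) by norm_num [av]]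
  have hD := Dd_pos x
  have h3p := e3_pos x
  have h31 : (0:ℝ) < e3 x + 1 := by linarith
  rw [A3, A0, gg, Nn, Dd] at *
  set a := e0 x; set b := e1 x; set c := e2 x; set d := e3 x
  field_simp
  ring

lemma sum1_23 (x : ℝ) : ∑ v, pvE VV 1 (iota x) {2,3} v = 1 := by
  have hne : ¬(({2,3} : Finset (Fin 4)) = ∅) := by decide
  have h0 : ¬((0 : Fin 4) ∈ ({2,3} : Finset (Fin 4))) := by decide
  have h1 : ¬((1 : Fin 4) ∈ ({2,3} : Finset (Fin 4))) := by decide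
  have h2m : ((2 : Fin 4) ∈ ({2,3} : Finset (Fin 4))) := by decide
  have h3 : ((3 : Fin 4) ∈ ({2,3} : Finset (Fin 4))) := by decide
  simp only [pvE, Fin.sum_univ_four, sSet_univ, sSet_23, score_eq, gfun_one,
    if_neg hne, if_neg h0, if_neg h1, if_pos h2m, if_pos h3]
  rw [show av 0 * x = 1/100 * x by norm_num [av], show av 1 * x = -(1/100) * x by norm_num [av],
    show av 2 * x = 1/10 * x by norm_num [av], show av 3 * x = -(1/10) * x by norm_num [av]]
  rw [← e0, ← e1, ← e2, ← e3]
  have hD := Dd_pos x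
  have h2p := e2_pos x
  have h3p := e3_pos x
  have h231 : (0:ℝ) < e2 x + e3 x + 1 := by linarith
  have h23 : (0:ℝ) < e2 x + e3 x := by linarith
  rw [gg, Dd] at *
  set a := e0 x; set b := e1 x; set c := e2 x; set d := e3 x
  field_simp
  ring

lemma sumav_23 (x : ℝ) : ∑ v, pvE VV 1 (iota x) {2,3} v * av v = A23 x := by
  have hne : ¬(({2,3} : Finset (Fin 4)) = ∅) := by decide
  have h0 : ¬((0 : Fin 4) ∈ ({2,3} : Finset (Fin 4))) := by decide
  have h1 : ¬((1 : Fin 4) ∈ ({2,3} : Finset (Fin 4))) := by decide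
  have h2m : ((2 : Fin 4) ∈ ({2,3} : Finset (Fin 4))) := by decide
  have h3 : ((3 : Fin 4) ∈ ({2,3} : Finset (Fin 4))) := by decide
  simp only [pvE, Fin.sum_univ_four, sSet_univ, sSet_23, score_eq, gfun_one,
    if_neg hne, if_neg h0, if_neg h1, if_pos h2m, if_pos h3]
  rw [show av 0 * x = 1/100 * x by norm_num [av], show av 1 * x = -(1/100) * x by norm_num [av],
    show av 2 * x = 1/10 * x by norm_num [av], show av 3 * x = -(1/10) * x by norm_num [av]]
  rw [← e0, ← e1, ← e2, ← e3]
  rw [show av 0 = 1/100 by norm_num [av], show av 1 = -(1/100) by norm_num [av],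
    show av 2 = 1/10 by norm_num [av], show av 3 = -(1/10) by norm_num [av]]
  have hD := Dd_pos x
  have h2p := e2_pos x
  have h3p := e3_pos x
  have h231 : (0:ℝ) < e2 x + e3 x + 1 := by linarith
  have h23 : (0:ℝ) < e2 x + e3 x := by linarith
  rw [A23, A0, gg, Nn, Dd] at *
  set a := e0 x; set b := e1 x; set c := e2 x; set d := e3 x
  field_simp
  ring
end S5

namespace S5
open Real

def cand0 : Finset (Finset (Fin 4)) := {C0}
noncomputable def pC0 : Finset (Fin 4) → ℝ := fun _ => 1
def Hs : Finset (Fin 4) := {0}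

noncomputable def mfun (po : Finset (Fin 4) → Finset (Fin 4) → ℝ) (x : ℝ) : ℝ :=
  po C0 ∅ * A0 x + po C0 {2} * A2 x + po C0 {3} * A3 x + po C0 {2,3} * A23 x

noncomputable def pclk (po : Finset (Fin 4) → Finset (Fin 4) → ℝ) (x : ℝ) : ℝ :=
  po C0 {2} * gg (e2 x) + po C0 {3} * gg (e3 x) + po C0 {2,3} * gg (e2 x + e3 x)

lemma sum_pow (F : Finset (Fin 4) → ℝ) :
    ∑ E ∈ C0.powerset, F E = F ∅ + F {2} + F {3} + F {2,3} := by
  rw [pow_C0]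
  rw [show ({∅, {2}, {3}, {2,3}} : Finset (Finset (Fin 4)))
      = insert ∅ (insert {2} (insert {3} {({2,3} : Finset (Fin 4))})) from rfl]
  rw [Finset.sum_insert (by decide), Finset.sum_insert (by decide),
    Finset.sum_insert (by decide), Finset.sum_singleton]
  ring

lemma pv_eq (po : Finset (Fin 4) → Finset (Fin 4) → ℝ) (x : ℝ) (v : Fin 4) :
    pv VV 1 cand0 pC0 po (iota x) v = ∑ E ∈ C0.powerset, po C0 E * pvE VV 1 (iota x) E v := by
  rw [pv, cand0, Finset.sum_singleton, pC0, one_mul]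

lemma sum_pv_one (po : Finset (Fin 4) → Finset (Fin 4) → ℝ)
    (hπ : ValidPolicy cand0 po) (x : ℝ) :
    ∑ v, pv VV 1 cand0 pC0 po (iota x) v = 1 := by
  have hs := (hπ C0 (by simp [cand0])).2
  calc ∑ v, pv VV 1 cand0 pC0 po (iota x) v
      = ∑ E ∈ C0.powerset, po C0 E * ∑ v, pvE VV 1 (iota x) E v := by
        simp only [pv_eq]
        rw [Finset.sum_comm]
        exact Finset.sum_congr rfl fun E _ => by rw [Finset.mul_sum]
    _ = ∑ E ∈ C0.powerset, po C0 E := by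
        rw [sum_pow, sum_pow, sum1_empty, sum1_2, sum1_3, sum1_23]; ring
    _ = 1 := hs

lemma sum_pv_av (po : Finset (Fin 4) → Finset (Fin 4) → ℝ) (x : ℝ) :
    ∑ v, pv VV 1 cand0 pC0 po (iota x) v * av v = mfun po x := by
  calc ∑ v, pv VV 1 cand0 pC0 po (iota x) v * av v
      = ∑ E ∈ C0.powerset, po C0 E * ∑ v, pvE VV 1 (iota x) E v * av v := by
        simp only [pv_eq, Finset.sum_mul]
        rw [Finset.sum_comm]
        exact Finset.sum_congr rfl fun E _ => by rw [Finset.mul_sum]; exact Finset.sum_congr rfl fun v _ => by ring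
    _ = mfun po x := by
        rw [sum_pow, sumav_empty, sumav_2, sumav_3, sumav_23, mfun]

lemma sum_smul_iota (f y : Fin 4 → ℝ) :
    ∑ v, f v • iota (y v) = iota (∑ v, f v * y v) := by
  ext i
  simp [iota]

lemma fmap_eq (po : Finset (Fin 4) → Finset (Fin 4) → ℝ)
    (hπ : ValidPolicy cand0 po) (x : ℝ) :
    Fmap VV 1 cand0 pC0 (fun v => if v ∈ Hs then (1:ℝ) else 1) 0 0 po (iota x)
      = iota (mfun po x) := by
  rw [Fmap]
  simp only [ite_self, one_mul, zero_add, zero_smul]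
  rw [show (fun v => pv VV 1 cand0 pC0 po (iota x) v • VV v)
      = fun v => pv VV 1 cand0 pC0 po (iota x) v • iota (av v) from rfl]
  rw [sum_smul_iota (fun v => pv VV 1 cand0 pC0 po (iota x) v) av,
    sum_pv_one po hπ x, sum_pv_av po x, inv_one, one_smul]

lemma pclk_eq (po : Finset (Fin 4) → Finset (Fin 4) → ℝ) (x : ℝ) :
    pCLKd VV 1 cand0 pC0 po (iota x) = pclk po x := by
  rw [pCLKd, cand0, Finset.sum_singleton, pC0, one_mul, sum_pow, sSet_empty,
    sSet_2, sSet_3, sSet_23, pclk, gfun_one, gfun_one, gfun_one, gfun_one]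
  rw [show gg 0 = 0 by norm_num [gg]]
  ring

lemma phd_eq (po : Finset (Fin 4) → Finset (Fin 4) → ℝ) (x : ℝ) :
    pHd VV 1 cand0 pC0 Hs po (iota x) = (1 - pclk po x) * sig x := by
  rw [pHd, pclk_eq, Hs, sSet_H, sSet_univ, sig, mul_div_assoc]

lemma objAt_eq (lam : ℝ) (po : Finset (Fin 4) → Finset (Fin 4) → ℝ) (x : ℝ) :
    objAt VV 1 cand0 pC0 Hs lam po (iota x)
      = pclk po x - lam * ((1 - pclk po x) * sig x) := by
  rw [objAt, pclk_eq, phd_eq]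

end S5

namespace S5
open Real

lemma exp_le_inv_one_sub {y : ℝ} (h0 : 0 ≤ y) (h1 : y < 1) : exp y ≤ 1/(1-y) := by
  have h2 : 1 - y ≤ exp (-y) := by have := Real.add_one_le_exp (-y); linarith
  have h3 : 0 < 1 - y := by linarith
  have h4 : exp y * (1 - y) ≤ exp y * exp (-y) := by
    apply mul_le_mul_of_nonneg_left h2 (exp_pos y).le
  rw [← Real.exp_add] at h4
  simp at h4
  rw [le_div_iff₀ h3]
  linarith

lemma exp_diff_le {y : ℝ} (h0 : 0 ≤ y) (h1 : y ≤ 1/4) : exp y - exp (-y) ≤ 4*y := by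
  have h2 : exp y ≤ 1/(1 - y) := exp_le_inv_one_sub h0 (by linarith)
  have h3 : 1 - y ≤ exp (-y) := by have := Real.add_one_le_exp (-y); linarith
  have h4 : (0:ℝ) < 1 - y := by linarith
  have : exp y - exp (-y) ≤ 1/(1-y) - (1 - y) := by linarith
  have h5 : 1/(1-y) - (1-y) = y * (2 - y) / (1 - y) := by field_simp; ring
  rw [h5] at this
  have h6 : y * (2 - y) / (1 - y) ≤ 4 * y := by
    rw [div_le_iff₀ h4]
    nlinarith
  linarith

lemma abs_exp_diff_le {y : ℝ} (h1 : |y| ≤ 1/4) : |exp y - exp (-y)| ≤ 4*|y| := by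
  rcases le_or_gt 0 y with h | h
  · rw [abs_of_nonneg h, abs_of_nonneg (by have := Real.exp_le_exp.2 (by linarith : -y ≤ y); linarith)]
    exact exp_diff_le h (by rwa [abs_of_nonneg h] at h1)
  · rw [abs_of_neg h]
    rw [abs_of_nonpos (by have := Real.exp_le_exp.2 (by linarith : y ≤ -y); linarith)]
    have := exp_diff_le (y := -y) (by linarith) (by rwa [abs_of_neg h] at h1)
    simp only [neg_neg] at this
    linarith

-- bounds valid for |x| ≤ 1/10
def Icc10 : Set ℝ := Set.Icc (-(1/10 : ℝ)) (1/10)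

lemma exp_bnd {y : ℝ} (h : |y| ≤ 1/100) : 99/100 ≤ exp y ∧ exp y ≤ 102/100 := by
  have h1 : -(1/100) ≤ y := by cases abs_le.1 h; linarith
  have h2 : y ≤ 1/100 := by cases abs_le.1 h; linarith
  constructor
  · have := Real.add_one_le_exp y
    have := Real.exp_le_exp.2 h1
    have := Real.add_one_le_exp (-(1/100):ℝ)
    nlinarith [Real.exp_pos y]
  · have := Real.exp_le_exp.2 h2
    have := exp_le_inv_one_sub (y := (1/100:ℝ)) (by norm_num) (by norm_num)
    nlinarith

lemma e_bnds {x : ℝ} (hx : x ∈ Icc10) :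
    (99/100 ≤ e0 x ∧ e0 x ≤ 102/100) ∧ (99/100 ≤ e1 x ∧ e1 x ≤ 102/100) ∧
    (99/100 ≤ e2 x ∧ e2 x ≤ 102/100) ∧ (99/100 ≤ e3 x ∧ e3 x ≤ 102/100) := by
  obtain ⟨h1, h2⟩ := hx
  refine ⟨exp_bnd ?_, exp_bnd ?_, exp_bnd ?_, exp_bnd ?_⟩ <;>
    rw [abs_le] <;> constructor <;> nlinarith

lemma Dd_bnds {x : ℝ} (hx : x ∈ Icc10) : 396/100 ≤ Dd x ∧ Dd x ≤ 408/100 := by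
  obtain ⟨⟨a1,a2⟩,⟨b1,b2⟩,⟨c1,c2⟩,⟨d1,d2⟩⟩ := e_bnds hx
  unfold Dd; constructor <;> linarith

lemma Nn_abs_le {x : ℝ} (hx : x ∈ Icc10) : |Nn x| ≤ 41/10000 := by
  obtain ⟨h1, h2⟩ := hx
  have k1 : |exp (1/100 * x) - exp (-(1/100 * x))| ≤ 4 * |1/100 * x| := by
    apply abs_exp_diff_le; rw [abs_le]; constructor <;> nlinarith
  have k2 : |exp (1/10 * x) - exp (-(1/10 * x))| ≤ 4 * |1/10 * x| := by
    apply abs_exp_diff_le; rw [abs_le]; constructor <;> nlinarith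
  have m1 : |1/100 * x| ≤ 1/1000 := by rw [abs_le]; constructor <;> nlinarith
  have m2 : |1/10 * x| ≤ 1/100 := by rw [abs_le]; constructor <;> nlinarith
  have : Nn x = 1/100 * (exp (1/100*x) - exp (-(1/100*x))) + 1/10 * (exp (1/10*x) - exp (-(1/10*x))) := by
    unfold Nn e0 e1 e2 e3; ring_nf
  rw [this]
  calc |1/100 * (exp (1/100*x) - exp (-(1/100*x))) + 1/10 * (exp (1/10*x) - exp (-(1/10*x)))|
      ≤ 1/100 * |exp (1/100*x) - exp (-(1/100*x))| + 1/10 * |exp (1/10*x) - exp (-(1/10*x))| := by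
        calc _ ≤ |1/100 * (exp (1/100*x) - exp (-(1/100*x)))| + |1/10 * (exp (1/10*x) - exp (-(1/10*x)))| := abs_add_le _ _
        _ = _ := by rw [abs_mul, abs_mul, abs_of_pos (by norm_num : (0:ℝ) < 1/100), abs_of_pos (by norm_num : (0:ℝ) < 1/10)]
    _ ≤ 1/100 * (4 * (1/1000)) + 1/10 * (4 * (1/100)) := by
        have := abs_nonneg (1/100 * x); have := abs_nonneg (1/10 * x); nlinarith
    _ ≤ 41/10000 := by norm_num

lemma A0_abs_le {x : ℝ} (hx : x ∈ Icc10) : |A0 x| ≤ 11/10000 := by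
  have hN := Nn_abs_le hx
  have hD := (Dd_bnds hx).1
  rw [A0, abs_div, abs_of_pos (Dd_pos x), div_le_iff₀ (Dd_pos x)]
  nlinarith [abs_nonneg (Nn x)]
end S5

namespace S5
open Real

lemma A0_abs_le_glob (x : ℝ) : |A0 x| ≤ 1/10 := by
  have h0 := e0_pos x; have h1 := e1_pos x; have h2 := e2_pos x; have h3 := e3_pos x
  have hD := Dd_pos x
  rw [A0, abs_div, abs_of_pos hD, div_le_iff₀ hD]
  rw [abs_le]; unfold Nn Dd at *; constructor <;> nlinarith

lemma gg_mono {s t : ℝ} (hs : 0 ≤ s) (hst : s ≤ t) : gg s ≤ gg t := by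
  unfold gg
  rw [div_le_div_iff₀ (by linarith) (by linarith)]
  nlinarith

lemma A2_sub_A0 (x : ℝ) : A2 x - A0 x = gg (e2 x) * (1/10 - A0 x) := by rw [A2]; ring
lemma A0_sub_A3 (x : ℝ) : A0 x - A3 x = gg (e3 x) * (1/10 + A0 x) := by rw [A3]; ring

lemma A0_le_A2 (x : ℝ) : A0 x ≤ A2 x := by
  have h := A0_abs_le_glob x
  have h1 := abs_le.1 h
  nlinarith [gg_nonneg (e2_pos x).le, A2_sub_A0 x]

lemma A3_le_A0 (x : ℝ) : A3 x ≤ A0 x := by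
  have h1 := abs_le.1 (A0_abs_le_glob x)
  nlinarith [gg_nonneg (e3_pos x).le, A0_sub_A3 x]

lemma A3_le_A2 (x : ℝ) : A3 x ≤ A2 x := le_trans (A3_le_A0 x) (A0_le_A2 x)

lemma A2_abs_le (x : ℝ) : |A2 x| ≤ 1/10 := by
  have h1 := abs_le.1 (A0_abs_le_glob x)
  have hg0 := gg_nonneg (e2_pos x).le
  have hg1 := (gg_lt_one (e2_pos x).le).le
  rw [A2, abs_le]; constructor <;> nlinarith

lemma A3_abs_le (x : ℝ) : |A3 x| ≤ 1/10 := by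
  have h1 := abs_le.1 (A0_abs_le_glob x)
  have hg0 := gg_nonneg (e3_pos x).le
  have hg1 := (gg_lt_one (e3_pos x).le).le
  rw [A3, abs_le]; constructor <;> nlinarith

lemma A23_abs_le (x : ℝ) : |A23 x| ≤ 1/10 := by
  have h1 := abs_le.1 (A0_abs_le_glob x)
  have h2 := e2_pos x; have h3 := e3_pos x
  have hs : (0:ℝ) < e2 x + e3 x := by linarith
  have hg0 := gg_nonneg hs.le
  have hg1 := (gg_lt_one hs.le).le
  have hM : |(1/10 * e2 x + -(1/10) * e3 x) / (e2 x + e3 x)| ≤ 1/10 := by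
    rw [abs_div, abs_of_pos hs, div_le_iff₀ hs, abs_le]; constructor <;> nlinarith
  have hM' := abs_le.1 hM
  rw [A23, abs_le]
  constructor <;> nlinarith [mul_le_mul_of_nonneg_right hM'.1 hg0,
    mul_le_mul_of_nonneg_right hM'.2 hg0]

-- symmetry
lemma e0_neg (x : ℝ) : e0 (-x) = e1 x := by rw [e0, e1]; ring_nf
lemma e1_neg (x : ℝ) : e1 (-x) = e0 x := by rw [e0, e1]; ring_nf
lemma e2_neg (x : ℝ) : e2 (-x) = e3 x := by rw [e2, e3]; ring_nf
lemma e3_neg (x : ℝ) : e3 (-x) = e2 x := by rw [e2, e3]; ring_nf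
lemma Dd_neg (x : ℝ) : Dd (-x) = Dd x := by
  rw [Dd, Dd, e0_neg, e1_neg, e2_neg, e3_neg]; ring
lemma Nn_neg (x : ℝ) : Nn (-x) = -Nn x := by
  rw [Nn, Nn, e0_neg, e1_neg, e2_neg, e3_neg]; ring
lemma A0_neg (x : ℝ) : A0 (-x) = -A0 x := by
  rw [A0, A0, Nn_neg, Dd_neg, neg_div]
lemma A3_neg (x : ℝ) : A3 (-x) = -A2 x := by
  rw [A3, A2, e3_neg, A0_neg]; ring

end S5

namespace S5
open Real

noncomputable def Pp (x : ℝ) : ℝ :=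
  1/10000 * e0 x + 1/10000 * e1 x + 1/100 * e2 x + 1/100 * e3 x

lemma Pp_pos (x : ℝ) : 0 < Pp x := by
  have := e0_pos x; have := e1_pos x; have := e2_pos x; have := e3_pos x
  unfold Pp; nlinarith

lemma hd_gen (c : ℝ) (x : ℝ) : HasDerivAt (fun y => Real.exp (c * y)) (c * Real.exp (c * x)) x := by
  have h : HasDerivAt (fun y : ℝ => c * y) c x := by
    simpa using (hasDerivAt_id x).const_mul c
  have h2 := h.exp
  convert h2 using 1
  ring

lemma hd_e0 (x : ℝ) : HasDerivAt e0 (1/100 * e0 x) x := hd_gen (1/100) x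
lemma hd_e1 (x : ℝ) : HasDerivAt e1 (-(1/100) * e1 x) x := hd_gen (-(1/100)) x
lemma hd_e2 (x : ℝ) : HasDerivAt e2 (1/10 * e2 x) x := hd_gen (1/10) x
lemma hd_e3 (x : ℝ) : HasDerivAt e3 (-(1/10) * e3 x) x := hd_gen (-(1/10)) x

lemma hd_Dd (x : ℝ) : HasDerivAt Dd (Nn x) x := by
  have h := (((hd_e0 x).add (hd_e1 x)).add (hd_e2 x)).add (hd_e3 x)
  have : Nn x = 1/100 * e0 x + -(1/100) * e1 x + 1/10 * e2 x + -(1/10) * e3 x := rfl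
  rw [this]; exact h

lemma hd_Nn (x : ℝ) : HasDerivAt Nn (Pp x) x := by
  have h := ((((hd_e0 x).const_mul (1/100:ℝ)).add ((hd_e1 x).const_mul (-(1/100):ℝ))).add
    ((hd_e2 x).const_mul (1/10:ℝ))).add ((hd_e3 x).const_mul (-(1/10):ℝ))
  have e : (1:ℝ)/100 * (1/100 * e0 x) + -(1/100) * (-(1/100) * e1 x) + 1/10 * (1/10 * e2 x)
      + -(1/10) * (-(1/10) * e3 x) = Pp x := by unfold Pp; ring
  rw [← e]; exact h

lemma hd_A0 (x : ℝ) :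
    HasDerivAt A0 ((Pp x * Dd x - Nn x * Nn x) / (Dd x)^2) x :=
  (hd_Nn x).div (hd_Dd x) (Dd_pos x).ne'

lemma dA0_abs_le (x : ℝ) : |(Pp x * Dd x - Nn x * Nn x) / (Dd x)^2| ≤ 1/100 := by
  have hD := Dd_pos x
  have hP := Pp_pos x
  have h0 := e0_pos x; have h1 := e1_pos x; have h2 := e2_pos x; have h3 := e3_pos x
  have hPD : Pp x ≤ 1/100 * Dd x := by unfold Pp Dd; nlinarith
  have hN : Nn x * Nn x ≤ 1/100 * (Dd x)^2 := by
    have := A0_abs_le_glob x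
    have h' : |Nn x| ≤ 1/10 * Dd x := by
      rw [A0, abs_div, abs_of_pos hD, div_le_iff₀ hD] at this; linarith
    calc Nn x * Nn x = |Nn x| * |Nn x| := by rw [← abs_mul_abs_self]
      _ ≤ (1/10 * Dd x) * (1/10 * Dd x) := by
          apply mul_le_mul h' h' (abs_nonneg _) (by positivity)
      _ = 1/100 * (Dd x)^2 := by ring
  rw [abs_div, abs_of_pos (by positivity : (0:ℝ) < (Dd x)^2), div_le_iff₀ (by positivity)]
  rw [abs_le]
  constructor
  · nlinarith [mul_le_mul_of_nonneg_right hPD hD.le, sq_nonneg (Nn x), mul_pos hP hD]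
  · nlinarith [mul_le_mul_of_nonneg_right hPD hD.le, sq_nonneg (Nn x)]

lemma hd_gg2 (x : ℝ) :
    HasDerivAt (fun y => gg (e2 y))
      ((1/10 * e2 x * (e2 x + 1) - e2 x * (1/10 * e2 x)) / (e2 x + 1)^2) x := by
  have h2 := e2_pos x
  exact (hd_e2 x).div ((hd_e2 x).add_const 1) (by positivity)

lemma dgg2_bnds (x : ℝ) :
    0 ≤ (1/10 * e2 x * (e2 x + 1) - e2 x * (1/10 * e2 x)) / (e2 x + 1)^2 ∧
    (1/10 * e2 x * (e2 x + 1) - e2 x * (1/10 * e2 x)) / (e2 x + 1)^2 ≤ 1/40 := by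
  have h2 := e2_pos x
  have he : (1/10 * e2 x * (e2 x + 1) - e2 x * (1/10 * e2 x)) = 1/10 * e2 x := by ring
  rw [he]
  constructor
  · positivity
  · rw [div_le_iff₀ (by positivity)]; nlinarith [sq_nonneg (e2 x - 1)]

lemma hd_gg3 (x : ℝ) :
    HasDerivAt (fun y => gg (e3 y))
      ((-(1/10) * e3 x * (e3 x + 1) - e3 x * (-(1/10) * e3 x)) / (e3 x + 1)^2) x := by
  have h3 := e3_pos x
  exact (hd_e3 x).div ((hd_e3 x).add_const 1) (by positivity)

lemma dgg3_bnds (x : ℝ) :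
    -(1/40) ≤ (-(1/10) * e3 x * (e3 x + 1) - e3 x * (-(1/10) * e3 x)) / (e3 x + 1)^2 ∧
    (-(1/10) * e3 x * (e3 x + 1) - e3 x * (-(1/10) * e3 x)) / (e3 x + 1)^2 ≤ 0 := by
  have h3 := e3_pos x
  have he : (-(1/10) * e3 x * (e3 x + 1) - e3 x * (-(1/10) * e3 x)) = -(1/10) * e3 x := by ring
  rw [he]
  constructor
  · rw [show -(1/10) * e3 x = -(1/10 * e3 x) by ring, neg_div, neg_le_neg_iff,
      div_le_iff₀ (by positivity)]
    nlinarith [sq_nonneg (e3 x - 1)]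
  · apply div_nonpos_of_nonpos_of_nonneg (by nlinarith) (by positivity)

noncomputable def dG2 (x : ℝ) : ℝ :=
  (1/10 * e2 x * (e2 x + 1) - e2 x * (1/10 * e2 x)) / (e2 x + 1)^2
noncomputable def dG3 (x : ℝ) : ℝ :=
  (-(1/10) * e3 x * (e3 x + 1) - e3 x * (-(1/10) * e3 x)) / (e3 x + 1)^2
noncomputable def dA0f (x : ℝ) : ℝ := (Pp x * Dd x - Nn x * Nn x) / (Dd x)^2

lemma hd_A2 (x : ℝ) :
    HasDerivAt A2 (1/10 * dG2 x + (-(dG2 x) * A0 x + (1 - gg (e2 x)) * dA0f x)) x := by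
  have h2 := (((hd_gg2 x).const_sub 1).mul (hd_A0 x))
  have h := ((hd_gg2 x).const_mul (1/10:ℝ)).add h2
  exact h

lemma hd_A3 (x : ℝ) :
    HasDerivAt A3 (-(1/10) * dG3 x + (-(dG3 x) * A0 x + (1 - gg (e3 x)) * dA0f x)) x := by
  have h2 := (((hd_gg3 x).const_sub 1).mul (hd_A0 x))
  have h := ((hd_gg3 x).const_mul (-(1/10):ℝ)).add h2
  exact h

lemma dA2_lt_one (x : ℝ) :
    1/10 * dG2 x + (-(dG2 x) * A0 x + (1 - gg (e2 x)) * dA0f x) < 1 := by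
  have h1 := dgg2_bnds x
  have h2 := abs_le.1 (A0_abs_le_glob x)
  have h3 := abs_le.1 (dA0_abs_le x)
  have h4 := gg_nonneg (e2_pos x).le
  have h5 := (gg_lt_one (e2_pos x).le).le
  unfold dG2 dA0f at *
  nlinarith [h1.1, h1.2]

lemma dA3_lt_one (x : ℝ) :
    -(1/10) * dG3 x + (-(dG3 x) * A0 x + (1 - gg (e3 x)) * dA0f x) < 1 := by
  have h1 := dgg3_bnds x
  have h2 := abs_le.1 (A0_abs_le_glob x)
  have h3 := abs_le.1 (dA0_abs_le x)
  have h4 := gg_nonneg (e3_pos x).le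
  have h5 := (gg_lt_one (e3_pos x).le).le
  unfold dG3 dA0f at *
  nlinarith [h1.1, h1.2]

lemma strictMono_sub_A2 : StrictMono (fun x => x - A2 x) := by
  have hderiv : ∀ x, HasDerivAt (fun x => x - A2 x)
      (1 - (1/10 * dG2 x + (-(dG2 x) * A0 x + (1 - gg (e2 x)) * dA0f x))) x :=
    fun x => (hasDerivAt_id x).sub (hd_A2 x)
  apply strictMono_of_deriv_pos
  intro x
  rw [(hderiv x).deriv]
  have := dA2_lt_one x; linarith

lemma strictMono_sub_A3 : StrictMono (fun x => x - A3 x) := by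
  have hderiv : ∀ x, HasDerivAt (fun x => x - A3 x)
      (1 - (-(1/10) * dG3 x + (-(dG3 x) * A0 x + (1 - gg (e3 x)) * dA0f x))) x :=
    fun x => (hasDerivAt_id x).sub (hd_A3 x)
  apply strictMono_of_deriv_pos
  intro x
  rw [(hderiv x).deriv]
  have := dA3_lt_one x; linarith

lemma hd_sig (x : ℝ) :
    HasDerivAt sig ((1/100 * e0 x * Dd x - e0 x * Nn x) / (Dd x)^2) x :=
  (hd_e0 x).div (hd_Dd x) (Dd_pos x).ne'

lemma sig_monoOn : StrictMonoOn sig Icc10 := by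
  have hc : ContinuousOn sig Icc10 := fun x _ => ((hd_sig x).differentiableAt.continuousAt).continuousWithinAt
  apply strictMonoOn_of_deriv_pos (convex_Icc _ _) hc
  intro x hx
  rw [interior_Icc] at hx
  rw [(hd_sig x).deriv]
  have hx' : x ∈ Icc10 := ⟨hx.1.le, hx.2.le⟩
  have hN := abs_le.1 (Nn_abs_le hx')
  have hD := (Dd_bnds hx').1
  have h0 := e0_pos x
  have hDp := Dd_pos x
  apply div_pos _ (by positivity)
  nlinarith

end S5

namespace S5
open Real

lemma cont_e (c : ℝ) : Continuous (fun y : ℝ => Real.exp (c * y)) :=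
  Real.continuous_exp.comp (continuous_const.mul continuous_id)

lemma cont_e0 : Continuous e0 := cont_e (1/100)
lemma cont_e1 : Continuous e1 := cont_e (-(1/100))
lemma cont_e2 : Continuous e2 := cont_e (1/10)
lemma cont_e3 : Continuous e3 := cont_e (-(1/10))
lemma cont_Dd : Continuous Dd := ((cont_e0.add cont_e1).add cont_e2).add cont_e3
lemma cont_Nn : Continuous Nn := by
  unfold Nn
  exact (((continuous_const.mul cont_e0).add (continuous_const.mul cont_e1)).add
    (continuous_const.mul cont_e2)).add (continuous_const.mul cont_e3)
lemma cont_A0 : Continuous A0 := cont_Nn.div cont_Dd fun x => (Dd_pos x).ne'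
lemma cont_gg_e2 : Continuous (fun x => gg (e2 x)) := by
  unfold gg
  exact cont_e2.div (cont_e2.add continuous_const) fun x => by have := e2_pos x; positivity
lemma cont_gg_e3 : Continuous (fun x => gg (e3 x)) := by
  unfold gg
  exact cont_e3.div (cont_e3.add continuous_const) fun x => by have := e3_pos x; positivity
lemma cont_gg_e23 : Continuous (fun x => gg (e2 x + e3 x)) := by
  unfold gg
  exact (cont_e2.add cont_e3).div ((cont_e2.add cont_e3).add continuous_const)
    fun x => by have := e2_pos x; have := e3_pos x; positivity
lemma cont_A2 : Continuous A2 := by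
  unfold A2
  exact (continuous_const.mul cont_gg_e2).add ((continuous_const.sub cont_gg_e2).mul cont_A0)
lemma cont_A3 : Continuous A3 := by
  unfold A3
  exact (continuous_const.mul cont_gg_e3).add ((continuous_const.sub cont_gg_e3).mul cont_A0)
lemma cont_A23 : Continuous A23 := by
  unfold A23
  refine (Continuous.mul ?_ cont_gg_e23).add ((continuous_const.sub cont_gg_e23).mul cont_A0)
  exact ((continuous_const.mul cont_e2).add (continuous_const.mul cont_e3)).div (cont_e2.add cont_e3)
    fun x => by have := e2_pos x; have := e3_pos x; positivity

lemma cont_mfun (po : Finset (Fin 4) → Finset (Fin 4) → ℝ) : Continuous (mfun po) := by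
  unfold mfun
  exact (((continuous_const.mul cont_A0).add (continuous_const.mul cont_A2)).add
    (continuous_const.mul cont_A3)).add (continuous_const.mul cont_A23)

lemma mem_pow_empty : (∅ : Finset (Fin 4)) ∈ C0.powerset := by decide
lemma mem_pow_2 : ({2} : Finset (Fin 4)) ∈ C0.powerset := by decide
lemma mem_pow_3 : ({3} : Finset (Fin 4)) ∈ C0.powerset := by decide
lemma mem_pow_23 : ({2,3} : Finset (Fin 4)) ∈ C0.powerset := by decide
lemma C0_mem_cand0 : C0 ∈ cand0 := by simp [cand0]

lemma coords (po : Finset (Fin 4) → Finset (Fin 4) → ℝ) (h : ValidPolicy cand0 po) :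
    0 ≤ po C0 ∅ ∧ 0 ≤ po C0 {2} ∧ 0 ≤ po C0 {3} ∧ 0 ≤ po C0 {2,3} ∧
    po C0 ∅ + po C0 {2} + po C0 {3} + po C0 {2,3} = 1 := by
  obtain ⟨hnn, hsum⟩ := h C0 C0_mem_cand0
  rw [sum_pow] at hsum
  exact ⟨hnn _ mem_pow_empty, hnn _ mem_pow_2, hnn _ mem_pow_3, hnn _ mem_pow_23, hsum⟩

lemma w23_zero (po : Finset (Fin 4) → Finset (Fin 4) → ℝ)
    (h : BoundedCard cand0 1 po) : po C0 {2,3} = 0 :=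
  h.2 C0 C0_mem_cand0 {2,3} mem_pow_23 (by decide)

lemma mfun_abs_le (po : Finset (Fin 4) → Finset (Fin 4) → ℝ)
    (h : ValidPolicy cand0 po) (x : ℝ) : |mfun po x| ≤ 1/10 := by
  obtain ⟨h0, h2, h3, h23, hs⟩ := coords po h
  have b0 := abs_le.1 (A0_abs_le_glob x)
  have b2 := abs_le.1 (A2_abs_le x)
  have b3 := abs_le.1 (A3_abs_le x)
  have b23 := abs_le.1 (A23_abs_le x)
  rw [mfun, abs_le]
  constructor <;> nlinarith

lemma exists_fix (po : Finset (Fin 4) → Finset (Fin 4) → ℝ)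
    (h : ValidPolicy cand0 po) : ∃ x, x ∈ Icc10 ∧ mfun po x = x := by
  have hc : Continuous (fun x => x - mfun po x) := continuous_id.sub (cont_mfun po)
  have h1 : (fun x => x - mfun po x) (-(1/10)) ≤ 0 := by
    have := abs_le.1 (mfun_abs_le po h (-(1/10))); simp only; linarith
  have h2 : (0:ℝ) ≤ (fun x => x - mfun po x) (1/10) := by
    have := abs_le.1 (mfun_abs_le po h (1/10)); simp only; linarith
  have := intermediate_value_Icc (by norm_num : -(1/10:ℝ) ≤ 1/10) hc.continuousOn
  have h0 : (0:ℝ) ∈ Set.Icc ((fun x => x - mfun po x) (-(1/10))) ((fun x => x - mfun po x) (1/10)) :=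
    ⟨h1, h2⟩
  obtain ⟨x, hx, hfx⟩ := this h0
  exact ⟨x, hx, by simpa [sub_eq_zero] using (sub_eq_zero.1 hfx).symm⟩

open Classical in
noncomputable def fpc (po : Finset (Fin 4) → Finset (Fin 4) → ℝ) : ℝ :=
  if h : ∃ x, x ∈ Icc10 ∧ mfun po x = x then h.choose else 0

lemma fpc_spec (po : Finset (Fin 4) → Finset (Fin 4) → ℝ)
    (h : ValidPolicy cand0 po) : fpc po ∈ Icc10 ∧ mfun po (fpc po) = fpc po := by
  have hex := exists_fix po h
  rw [fpc, dif_pos hex]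
  exact hex.choose_spec

noncomputable def pi1 : Finset (Fin 4) → Finset (Fin 4) → ℝ :=
  fun _ E => if E = {2} then 1 else 0
noncomputable def pi2 : Finset (Fin 4) → Finset (Fin 4) → ℝ :=
  fun _ E => if E = {3} then 1 else 0

lemma pi1_valid : ValidPolicy cand0 pi1 := by
  intro C hC
  rw [cand0, Finset.mem_singleton] at hC
  subst hC
  constructor
  · intro E _; rw [pi1]; split <;> norm_num
  · rw [sum_pow]
    rw [show pi1 C0 ∅ = 0 from if_neg (by decide), show pi1 C0 {2} = 1 from if_pos rfl,
      show pi1 C0 {3} = 0 from if_neg (by decide), show pi1 C0 {2,3} = 0 from if_neg (by decide)]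
    norm_num

lemma pi2_valid : ValidPolicy cand0 pi2 := by
  intro C hC
  rw [cand0, Finset.mem_singleton] at hC
  subst hC
  constructor
  · intro E _; rw [pi2]; split <;> norm_num
  · rw [sum_pow]
    rw [show pi2 C0 ∅ = 0 from if_neg (by decide), show pi2 C0 {2} = 0 from if_neg (by decide),
      show pi2 C0 {3} = 1 from if_pos rfl, show pi2 C0 {2,3} = 0 from if_neg (by decide)]
    norm_num

lemma pi1_bounded : BoundedCard cand0 1 pi1 := by
  refine ⟨pi1_valid, ?_⟩
  intro C _ E _ hcard
  rw [pi1, if_neg]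
  intro hE; rw [hE] at hcard; norm_num at hcard

lemma pi2_bounded : BoundedCard cand0 1 pi2 := by
  refine ⟨pi2_valid, ?_⟩
  intro C _ E _ hcard
  rw [pi2, if_neg]
  intro hE; rw [hE] at hcard; norm_num at hcard

lemma mfun_pi1 (x : ℝ) : mfun pi1 x = A2 x := by
  rw [mfun, show pi1 C0 ∅ = 0 from if_neg (by decide), show pi1 C0 {2} = 1 from if_pos rfl,
    show pi1 C0 {3} = 0 from if_neg (by decide), show pi1 C0 {2,3} = 0 from if_neg (by decide)]
  ring

lemma mfun_pi2 (x : ℝ) : mfun pi2 x = A3 x := by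
  rw [mfun, show pi2 C0 ∅ = 0 from if_neg (by decide), show pi2 C0 {2} = 0 from if_neg (by decide),
    show pi2 C0 {3} = 1 from if_pos rfl, show pi2 C0 {2,3} = 0 from if_neg (by decide)]
  ring

lemma pclk_pi1 (x : ℝ) : pclk pi1 x = gg (e2 x) := by
  rw [pclk, show pi1 C0 {2} = 1 from if_pos rfl,
    show pi1 C0 {3} = 0 from if_neg (by decide), show pi1 C0 {2,3} = 0 from if_neg (by decide)]
  ring

lemma pclk_pi2 (x : ℝ) : pclk pi2 x = gg (e3 x) := by
  rw [pclk, show pi2 C0 {2} = 0 from if_neg (by decide), show pi2 C0 {3} = 1 from if_pos rfl,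
    show pi2 C0 {2,3} = 0 from if_neg (by decide)]
  ring

lemma pi1_ne_pi2 : pi1 ≠ pi2 := by
  intro h
  have := congrFun (congrFun h C0) {2}
  rw [pi1, pi2, if_pos rfl, if_neg (by decide)] at this
  norm_num at this

end S5

namespace S5
open Real

noncomputable def aa : ℝ := fpc pi1

lemma aa_mem : aa ∈ Icc10 := (fpc_spec pi1 pi1_valid).1
lemma aa_fix : A2 aa = aa := by
  have h := (fpc_spec pi1 pi1_valid).2
  rwa [mfun_pi1] at h

lemma gg_e2_bnds {x : ℝ} (hx : x ∈ Icc10) :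
    49/100 ≤ gg (e2 x) ∧ gg (e2 x) ≤ 51/100 := by
  obtain ⟨_, _, ⟨c1, c2⟩, _⟩ := e_bnds hx
  have h2 := e2_pos x
  constructor
  · calc (49:ℝ)/100 ≤ gg (99/100) := by rw [gg]; norm_num
      _ ≤ gg (e2 x) := gg_mono (by norm_num) c1
  · calc gg (e2 x) ≤ gg (102/100) := gg_mono h2.le c2
      _ ≤ 51/100 := by rw [gg]; norm_num

lemma aa_lb : 47/1000 ≤ aa := by
  have hfix := aa_fix
  have hg := gg_e2_bnds aa_mem
  have hA0 := abs_le.1 (A0_abs_le aa_mem)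
  rw [A2] at hfix
  have hgnn : (0:ℝ) ≤ 1 - gg (e2 aa) := by linarith [hg.2]
  have hb1 : -(11/10000) ≤ (1 - gg (e2 aa)) * A0 aa := by
    nlinarith [mul_le_mul_of_nonneg_left hA0.1 hgnn]
  nlinarith [hg.1, hg.2]

lemma aa_pos : 0 < aa := lt_of_lt_of_le (by norm_num) aa_lb

lemma neg_aa_fix : A3 (-aa) = -aa := by rw [A3_neg, aa_fix]

lemma neg_aa_mem : -aa ∈ Icc10 := by
  obtain ⟨h1, h2⟩ := aa_mem
  exact ⟨by linarith, by linarith⟩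

lemma fix_bounds (po : Finset (Fin 4) → Finset (Fin 4) → ℝ)
    (hb : BoundedCard cand0 1 po) {x : ℝ} (hfix : mfun po x = x) :
    -aa ≤ x ∧ x ≤ aa := by
  obtain ⟨h0, h2, h3, h23, hs⟩ := coords po hb.1
  have hw23 := w23_zero po hb
  have hsum : po C0 ∅ + po C0 {2} + po C0 {3} = 1 := by linarith
  have hle : mfun po x ≤ A2 x := by
    rw [mfun, hw23]
    have hx2 : (po C0 ∅ + po C0 {2} + po C0 {3}) * A2 x = A2 x := by rw [hsum]; ring
    have k1 := mul_le_mul_of_nonneg_left (A0_le_A2 x) h0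
    have k2 := mul_le_mul_of_nonneg_left (A3_le_A2 x) h3
    nlinarith
  have hge : A3 x ≤ mfun po x := by
    rw [mfun, hw23]
    have hx2 : (po C0 ∅ + po C0 {2} + po C0 {3}) * A3 x = A3 x := by rw [hsum]; ring
    have k1 := mul_le_mul_of_nonneg_left (A3_le_A0 x) h0
    have k2 := mul_le_mul_of_nonneg_left (A3_le_A2 x) h2
    nlinarith
  constructor
  · by_contra hlt
    push_neg at hlt
    have := strictMono_sub_A3 hlt
    simp only at this
    rw [neg_aa_fix] at this
    nlinarith
  · by_contra hlt
    push_neg at hlt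
    have := strictMono_sub_A2 hlt
    simp only at this
    rw [aa_fix] at this
    nlinarith

lemma gg_e2_le {x y : ℝ} (h : x ≤ y) : gg (e2 x) ≤ gg (e2 y) :=
  gg_mono (e2_pos x).le (Real.exp_le_exp.2 (by linarith))

lemma e3_eq_e2_neg (x : ℝ) : e3 x = e2 (-x) := (e2_neg x).symm

lemma pclk_le_bounded (po : Finset (Fin 4) → Finset (Fin 4) → ℝ)
    (hb : BoundedCard cand0 1 po) {x : ℝ} (h1 : -aa ≤ x) (h2 : x ≤ aa) :
    0 ≤ pclk po x ∧ pclk po x ≤ gg (e2 aa) := by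
  obtain ⟨w0, w2, w3, w23, hs⟩ := coords po hb.1
  have hw23 := w23_zero po hb
  have hg2 : gg (e2 x) ≤ gg (e2 aa) := gg_e2_le h2
  have hg3 : gg (e3 x) ≤ gg (e2 aa) := by
    rw [e3_eq_e2_neg]; exact gg_e2_le (by linarith)
  have hg2n := gg_nonneg (e2_pos x).le
  have hg3n := gg_nonneg (e3_pos x).le
  have hgan := gg_nonneg (e2_pos aa).le
  rw [pclk, hw23]
  constructor
  · nlinarith
  · nlinarith

lemma sig_pos (x : ℝ) : 0 < sig x := div_pos (e0_pos x) (Dd_pos x)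

lemma sig_le_sig {x y : ℝ} (hx : x ∈ Icc10) (hy : y ∈ Icc10) (h : x ≤ y) :
    sig x ≤ sig y := by
  rcases eq_or_lt_of_le h with rfl | hlt
  · exact le_refl _
  · exact (sig_monoOn hx hy hlt).le

lemma obj_compare {P P' σ σ' lam : ℝ} (hP : P' ≤ P) (hP1 : P < 1) (hσ : 0 ≤ σ)
    (hσ' : σ ≤ σ') (hP'0 : 0 ≤ P') (hlam : 0 ≤ lam) :
    P' - lam * ((1 - P') * σ') ≤ P - lam * ((1 - P) * σ) := by
  nlinarith [mul_nonneg hlam hσ, mul_nonneg hlam (sub_nonneg.2 hσ')]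

-- the gap
lemma sig_gap : 2/10000 ≤ sig aa - sig (-aa) := by
  have hD := Dd_bnds aa_mem
  have hDpos := Dd_pos aa
  set y := aa/100 with hy_def
  have hy1 : y ≤ 1/1000 := by have := aa_mem.2; rw [hy_def]; linarith
  have hy0 : 47/100000 ≤ y := by have := aa_lb; rw [hy_def]; linarith
  have hE : e0 aa = Real.exp y := by
    rw [e0, show (1/100:ℝ) * aa = y from by rw [hy_def]; ring]
  have hE1 : e1 aa = (Real.exp y)⁻¹ := by
    rw [e1, show (-(1/100):ℝ) * aa = -y from by rw [hy_def]; ring, Real.exp_neg]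
  have h1 : 1 + y ≤ Real.exp y := by linarith [Real.add_one_le_exp y]
  have h2 : (Real.exp y)⁻¹ ≤ (1+y)⁻¹ := inv_anti₀ (by linarith) h1
  have hmul : (1 + y) * (1 + y)⁻¹ = 1 := mul_inv_cancel₀ (by linarith)
  have key : 19/10 * y ≤ (1+y) - (1+y)⁻¹ := by nlinarith
  have hlow : 19/10 * y ≤ e0 aa - e1 aa := by
    rw [hE, hE1]; linarith
  have hgap : sig aa - sig (-aa) = (e0 aa - e1 aa) / Dd aa := by
    rw [sig, sig, Dd_neg, e0_neg, div_sub_div_same]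
  rw [hgap, le_div_iff₀ hDpos]
  nlinarith [hD.2]

lemma gam_lt_one : gg (e2 aa) < 1 := gg_lt_one (e2_pos aa).le

lemma one_sub_gam : 49/100 ≤ 1 - gg (e2 aa) := by
  have := (gg_e2_bnds aa_mem).2; linarith

end S5

namespace S5
open Real

noncomputable def ubarF : (Finset (Fin 4) → Finset (Fin 4) → ℝ) → Vec 1 :=
  fun po => if po = pi2 then iota (-aa) else iota (fpc po)

lemma ubarF_pi1 : ubarF pi1 = iota aa := by
  rw [ubarF, if_neg pi1_ne_pi2]; rfl

lemma ubarF_pi2 : ubarF pi2 = iota (-aa) := by rw [ubarF, if_pos rfl]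

lemma ubar_fix : ∀ po, ValidPolicy cand0 po →
    Fmap VV 1 cand0 pC0 (fun v => if v ∈ Hs then (1:ℝ) else 1) 0 0 po (ubarF po)
      = ubarF po := by
  intro po hpo
  by_cases h : po = pi2
  · subst h
    rw [ubarF_pi2, fmap_eq pi2 pi2_valid, mfun_pi2, neg_aa_fix]
  · rw [ubarF, if_neg h, fmap_eq po hpo, (fpc_spec po hpo).2]

lemma obj_pi2 (lam : ℝ) : objAt VV 1 cand0 pC0 Hs lam pi2 (iota (-aa))
    = gg (e2 aa) - lam * ((1 - gg (e2 aa)) * sig (-aa)) := by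
  rw [objAt_eq, pclk_pi2, e3_neg]

lemma obj_pi1 (lam : ℝ) : objAt VV 1 cand0 pC0 Hs lam pi1 (iota aa)
    = gg (e2 aa) - lam * ((1 - gg (e2 aa)) * sig aa) := by
  rw [objAt_eq, pclk_pi1]

lemma pistar_max (lam : ℝ) (hlam : 0 ≤ lam) :
    ∀ po, BoundedCard cand0 1 po →
      objAt VV 1 cand0 pC0 Hs lam po (ubarF po)
        ≤ objAt VV 1 cand0 pC0 Hs lam pi2 (ubarF pi2) := by
  intro po hb
  by_cases h : po = pi2
  · subst h; exact le_refl _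
  · rw [ubarF_pi2, obj_pi2, ubarF, if_neg h]
    have hspec := fpc_spec po hb.1
    have hx := fix_bounds po hb hspec.2
    have hP := pclk_le_bounded po hb hx.1 hx.2
    have hsig : sig (-aa) ≤ sig (fpc po) := sig_le_sig neg_aa_mem hspec.1 hx.1
    rw [objAt_eq]
    exact obj_compare hP.2 gam_lt_one (sig_pos (-aa)).le hsig hP.1 hlam

lemma static_max (lam : ℝ) (hlam : 0 ≤ lam) {x : ℝ} (hx0 : 0 ≤ x) :
    ∀ po', BoundedCard cand0 1 po' →
      objAt VV 1 cand0 pC0 Hs lam po' (iota x)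
        ≤ objAt VV 1 cand0 pC0 Hs lam pi1 (iota x) := by
  intro po' hb
  obtain ⟨w0, w2, w3, w23, hs⟩ := coords po' hb.1
  have hw23 := w23_zero po' hb
  have hg3 : gg (e3 x) ≤ gg (e2 x) :=
    gg_mono (e3_pos x).le (Real.exp_le_exp.2 (by linarith))
  have hg2n := gg_nonneg (e2_pos x).le
  have hg3n := gg_nonneg (e3_pos x).le
  have hP' : pclk po' x ≤ gg (e2 x) := by
    rw [pclk, hw23]; nlinarith
  have hP'0 : 0 ≤ pclk po' x := by
    rw [pclk, hw23]; nlinarith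
  rw [objAt_eq, objAt_eq, pclk_pi1]
  exact obj_compare hP' (gg_lt_one (e2_pos x).le) (sig_pos x).le (le_refl _) hP'0 hlam

lemma norm_cond_aux : (1:ℝ)/10 < 1/6 * (Real.sqrt (3/5)) := by
  have h : (6/10:ℝ) < Real.sqrt (3/5) := by
    rw [show (6/10:ℝ) = Real.sqrt ((6/10)^2) from (Real.sqrt_sq (by norm_num)).symm]
    apply Real.sqrt_lt_sqrt (by norm_num)
    norm_num
  linarith

noncomputable def useqF : ℕ → Vec 1 := fun ℓ => if ℓ = 0 then (0 : Vec 1) else iota aa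

lemma useqF_zero : useqF 0 = (0 : Vec 1) := rfl
lemma useqF_zero_iota : useqF 0 = iota 0 := rfl
lemma useqF_succ (ℓ : ℕ) : useqF (ℓ+1) = iota aa := by
  rw [useqF, if_neg (Nat.succ_ne_zero ℓ)]

end S5


/-- Theorem 3: alternating optimization can be arbitrarily suboptimal.
For every `M > 0` there is an instance of the dynamic MNL model — dimension `d`, `n`
distinct item profiles `V`, harmful set `H`, `c > 0`, attraction weights with
`α_H = α_NH > 0`, `β = 0`, inherent profile `u0`, penalty `λ ≥ 0`, capacity `k = 1` —
satisfying the uniform contraction condition of Theorem 2 (so that each policy `π` has a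
(unique) stationary profile `ū(π)`, and the steady-state objective is
`f(π) = p_CLK(π,ū(π)) − λ p_H(π,ū(π))`), together with a maximizer `π*` of `f` over
bounded-cardinality policies, and a run of the alternating-optimization algorithm
(`u⁰ = u0`; `π^{ℓ+1}` maximizes the static objective at `u^ℓ` over bounded-cardinality
policies; `u^{ℓ+1} = ū(π^{ℓ+1})`) whose policy iterates converge to a policy `πlim`
with `f(π*) − f(πlim) > M`. -/
theorem stmt5 (M : ℝ) (hM : 0 < M) :
    ∃ (d n : ℕ) (V : Fin n → Vec d), Function.Injective V ∧
    ∃ (Hset : Finset (Fin n)) (c : ℝ), 0 < c ∧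
    ∃ αH αNH : ℝ, αH = αNH ∧ 0 < αH ∧
    ∃ β : ℝ, β = 0 ∧
    ∃ (u0 : Vec d) (lam : ℝ), 0 ≤ lam ∧
    ∃ (cand : Finset (Finset (Fin n))) (pC : Finset (Fin n) → ℝ),
      (∀ C ∈ cand, Disjoint C Hset) ∧
      (∀ C ∈ cand, 0 ≤ pC C) ∧ (∑ C ∈ cand, pC C) = 1 ∧
      (∀ v : Fin n, ‖V v‖ < (1/6) * (Real.sqrt (‖u0‖^2
          + 12 * (αNH + β) / (5 * (n : ℝ) * (d : ℝ) * αH)) - ‖u0‖)) ∧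
      ∃ ubar : (Finset (Fin n) → Finset (Fin n) → ℝ) → Vec d,
        (∀ π, ValidPolicy cand π →
          Fmap V c cand pC (fun v => if v ∈ Hset then αH else αNH) β u0 π (ubar π)
            = ubar π) ∧
        ∃ πstar, BoundedCard cand 1 πstar ∧
          (∀ π, BoundedCard cand 1 π →
            objAt V c cand pC Hset lam π (ubar π)
              ≤ objAt V c cand pC Hset lam πstar (ubar πstar)) ∧
          ∃ (πseq : ℕ → Finset (Fin n) → Finset (Fin n) → ℝ) (useq : ℕ → Vec d)
            (πlim : Finset (Fin n) → Finset (Fin n) → ℝ),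
            useq 0 = u0 ∧
            (∀ ℓ : ℕ,
              BoundedCard cand 1 (πseq (ℓ + 1)) ∧
              (∀ π', BoundedCard cand 1 π' →
                objAt V c cand pC Hset lam π' (useq ℓ)
                  ≤ objAt V c cand pC Hset lam (πseq (ℓ + 1)) (useq ℓ)) ∧
              useq (ℓ + 1) = ubar (πseq (ℓ + 1))) ∧
            (∃ N : ℕ, ∀ ℓ ≥ N, πseq ℓ = πlim) ∧
            M < objAt V c cand pC Hset lam πstar (ubar πstar)
                  - objAt V c cand pC Hset lam πlim (ubar πlim) := by

  have hlam : (0:ℝ) ≤ 100000*(M+1) := by nlinarith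
  refine ⟨1, 4, S5.VV, S5.VV_inj, S5.Hs, 1, one_pos, 1, 1, rfl, one_pos, 0, rfl,
    (0 : Vec 1), 100000*(M+1), hlam, S5.cand0, S5.pC0, ?_, ?_, ?_, ?_, ?_⟩
  · intro C hC
    rw [S5.cand0, Finset.mem_singleton] at hC
    subst hC
    decide
  · intro C _
    norm_num [S5.pC0]
  · rw [S5.cand0, Finset.sum_singleton]; rfl
  · intro v
    simp only [norm_zero, sub_zero]
    have he : (0:ℝ)^2 + 12*((1:ℝ)+0)/(5*((4:ℕ):ℝ)*((1:ℕ):ℝ)*1) = 3/5 := by norm_num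
    rw [he]
    have hb : ‖S5.VV v‖ ≤ 1/10 := by
      rw [show S5.VV v = S5.iota (S5.av v) from rfl, S5.norm_iota]
      fin_cases v <;> simp [S5.av] <;> norm_num [abs_le]
    calc ‖S5.VV v‖ ≤ 1/10 := hb
      _ < 1/6 * Real.sqrt (3/5) := S5.norm_cond_aux
  · refine ⟨S5.ubarF, S5.ubar_fix, S5.pi2, S5.pi2_bounded,
      S5.pistar_max _ hlam, (fun _ => S5.pi1), S5.useqF,
      S5.pi1, S5.useqF_zero, ?_, ⟨0, fun ℓ _ => rfl⟩, ?_⟩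
    · intro ℓ
      refine ⟨S5.pi1_bounded, ?_, ?_⟩
      · cases ℓ with
        | zero =>
            intro po' hb'
            rw [S5.useqF_zero_iota]
            exact S5.static_max _ hlam le_rfl po' hb'
        | succ k =>
            intro po' hb'
            rw [S5.useqF_succ]
            exact S5.static_max _ hlam S5.aa_pos.le po' hb'
      · rw [S5.useqF_succ, S5.ubarF_pi1]
    · rw [S5.ubarF_pi2, S5.ubarF_pi1, S5.obj_pi2, S5.obj_pi1]
      have h1 : (49/100 : ℝ)*(2/10000)
          ≤ (1 - S5.gg (S5.e2 S5.aa)) * (S5.sig S5.aa - S5.sig (-S5.aa)) := by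
        apply mul_le_mul S5.one_sub_gam S5.sig_gap (by norm_num)
        linarith [S5.one_sub_gam]
      have h2 := mul_le_mul_of_nonneg_left h1 hlam
      nlinarith [h2, hM]

end
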